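/- arXiv:1801.08456 — 3 statements merged into one kernel-verified Lean document; each statement's English description precedes it below -/
import Mathlib

section
/- Let G = H₁ × ⋯ × Hₘ be a direct product of finite groups. If X is a determining set of G, then for each i, the set of i-th coordinates of elements of X contains a determining set of Hᵢ; in particular α(G) ≥ max_i α(Hᵢ). -/
/-- A subset `D` of a group `G` is a determining set if the only automorphism of `G`
fixing every element of `D` is the identity. -/
def IsDetermining {G : Type*} [Group G] (D : Set G) : Prop :=
  ∀ φ : G ≃* G, (∀ x ∈ D, φ x = x) → φ = MulEquiv.refl G

/-- The determining number: the minimum size of a (finite) determining set. -/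
noncomputable def detNumber (G : Type*) [Group G] : ℕ :=
  sInf {n | ∃ D : Finset G, D.card = n ∧ IsDetermining (D : Set G)}

/-- The generating number: the minimum size of a (finite) generating set. -/
noncomputable def genNumber (G : Type*) [Group G] : ℕ :=
  sInf {n | ∃ D : Finset G, D.card = n ∧ Subgroup.closure (D : Set G) = ⊤}

namespace IsDetermining

variable {G : Type*} [Group G]

theorem univ : IsDetermining (Set.univ : Set G) :=
  fun _ hφ => MulEquiv.ext fun x => hφ x (Set.mem_univ x)

/- An automorphism `φ` of `H i` fixing the `i`-th coordinates of `X` extends, by the identity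
on the other factors, to an automorphism of the product fixing `X`; that extension is the
identity, and evaluating it at `Pi.mulSingle i a` gives `φ a = a`. -/
theorem image_eval {ι : Type*} {H : ι → Type*} [∀ i, Group (H i)] {X : Set (∀ i, H i)}
    (hX : IsDetermining X) (i : ι) : IsDetermining (Function.eval i '' X) := by
  classical
  intro φ hφ
  let e : ∀ j, H j ≃* H j := Function.update (fun j => MulEquiv.refl (H j)) i φ
  have he_fix : ∀ j (x : ∀ j, H j), x ∈ X → e j (x j) = x j := by
    intro j x hx
    by_cases hj : j = i
    · subst hj
      simpa [e] using hφ (x j) ⟨x, hx, rfl⟩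
    · simp [e, Function.update_of_ne hj]
  have hid : MulEquiv.piCongrRight e = MulEquiv.refl (∀ j, H j) :=
    hX _ fun x hx => funext fun j => he_fix j x hx
  ext a
  simpa [e] using congrFun (DFunLike.congr_fun hid (Pi.mulSingle i a)) i

end IsDetermining

section detNumber

variable {G : Type*} [Group G]

theorem detNumber_le_card {D : Finset G} (hD : IsDetermining (D : Set G)) :
    detNumber G ≤ D.card :=
  Nat.sInf_le ⟨D, rfl, hD⟩

theorem exists_isDetermining_card_eq_detNumber [Finite G] :
    ∃ D : Finset G, D.card = detNumber G ∧ IsDetermining (D : Set G) := by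
  have := Fintype.ofFinite G
  have huniv : IsDetermining ((Finset.univ : Finset G) : Set G) := by
    simpa using IsDetermining.univ
  exact Nat.sInf_mem (s := {n | ∃ D : Finset G, D.card = n ∧ IsDetermining (D : Set G)})
    ⟨_, Finset.univ, rfl, huniv⟩

end detNumber

theorem stmt7 {m : ℕ} (H : Fin m → Type*) [∀ i, Group (H i)]
    [∀ i, Finite (H i)] (X : Set (∀ i, H i)) (hX : IsDetermining X) :
    (∀ i, IsDetermining (Function.eval i '' X)) ∧
      ∀ i, detNumber (H i) ≤ detNumber (∀ j, H j) := by
  classical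
  refine ⟨hX.image_eval, fun i => ?_⟩
  obtain ⟨D, hcard, hD⟩ := exists_isDetermining_card_eq_detNumber (G := ∀ j, H j)
  calc detNumber (H i) ≤ (D.image (Function.eval i)).card :=
        detNumber_le_card (by simpa using hD.image_eval i)
    _ ≤ D.card := Finset.card_image_le
    _ = detNumber (∀ j, H j) := hcard
end

section
/- A finite group of order at least 2 has determining number 1 if and only if it is cyclic of order at least 3. -/
/-!
If `{g}` is determining, every inner automorphism by an element commuting with `g` is trivial;
so `g` is central, and then all of `G` is. A finite abelian group that is not cyclic has a prime
`p` with more than `p` solutions of `x ^ p = 1`: otherwise `x ^ n = 1` would have at most `n`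
solutions for every `n` (the count is submultiplicative in `n`), forcing the exponent to equal
the order. For such `p`, `G / G ^ p` has order greater than `p`, so `⟨g⟩ G ^ p` is proper and
there is a nontrivial `e : G → ℤ/p` with `e g = 0`; counting gives an `a ≠ 1` with `a ^ p = 1`
and `e a = 0`. Then `x ↦ x a ^ (e x)` is a nontrivial automorphism fixing `g`.

Conversely a generator determines a cyclic group, and `|Aut (ℤ/n)| = φ(n)`, which is `1`
exactly when `n ≤ 2`.
-/

open Subgroup

theorem Nat.sInf_eq_one_iff {S : Set ℕ} : sInf S = 1 ↔ 1 ∈ S ∧ 0 ∉ S := by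
  refine ⟨fun h => ⟨?_, fun h0 => ?_⟩, fun ⟨h1, h0⟩ => ?_⟩
  · have hS : S.Nonempty := Set.nonempty_iff_ne_empty.2 fun hS => by simp [hS] at h
    exact h ▸ Nat.sInf_mem hS
  · simpa [h] using Nat.sInf_le h0
  · refine le_antisymm (Nat.sInf_le h1) (Nat.one_le_iff_ne_zero.2 fun h => h0 ?_)
    exact h ▸ Nat.sInf_mem ⟨1, h1⟩

section Determining

variable {G : Type*} [Group G]

theorem isDetermining_empty_iff : IsDetermining (∅ : Set G) ↔ Subsingleton (MulAut G) :=
  ⟨fun h => ⟨fun φ ψ => (h φ (by simp)).trans (h ψ (by simp)).symm⟩,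
    fun _ _ _ => Subsingleton.elim _ _⟩

theorem isDetermining_singleton_iff {g : G} :
    IsDetermining ({g} : Set G) ↔ ∀ φ : MulAut G, φ g = g → φ = MulEquiv.refl G := by
  simp [IsDetermining]

theorem detNumber_eq_one_iff :
    detNumber G = 1 ↔ ¬ IsDetermining (∅ : Set G) ∧ ∃ g : G, IsDetermining ({g} : Set G) := by
  simp only [detNumber, Nat.sInf_eq_one_iff, Set.mem_ofPred_eq, Finset.card_eq_one,
    Finset.card_eq_zero]
  constructor
  · rintro ⟨⟨D, ⟨g, rfl⟩, hD⟩, h0⟩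
    exact ⟨fun h => h0 ⟨∅, rfl, by simpa using h⟩, g, by simpa using hD⟩
  · rintro ⟨h0, g, hg⟩
    exact ⟨⟨{g}, ⟨g, rfl⟩, by simpa using hg⟩, fun ⟨D, hD, h⟩ => h0 (by simpa [hD] using h)⟩

theorem isDetermining_of_closure_eq_top {D : Set G} (hD : closure D = ⊤) : IsDetermining D :=
  fun _ hφ => MulEquiv.toMonoidHom_injective (MonoidHom.eq_of_eqOn_dense hD hφ)

theorem mul_comm_of_isDetermining_singleton {g : G} (hg : IsDetermining ({g} : Set G))
    (x y : G) : x * y = y * x := by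
  have conj_eq_self : ∀ h : G, Commute h g → ∀ x, h * x * h⁻¹ = x := fun h hh x => by
    have := isDetermining_singleton_iff.1 hg (MulAut.conj h) (by simp [hh.eq])
    simpa using DFunLike.congr_fun this x
  have hg_central : ∀ x, Commute x g := fun x =>
    (mul_inv_eq_iff_eq_mul.1 (conj_eq_self g (Commute.refl g) x)).symm
  exact mul_inv_eq_iff_eq_mul.1 (conj_eq_self x (hg_central x) y)

theorem IsCyclic.nontrivial_mulAut_iff [Finite G] [IsCyclic G] :
    Nontrivial (MulAut G) ↔ 3 ≤ Nat.card G := by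
  rw [← Finite.one_lt_card_iff_nontrivial, IsCyclic.card_mulAut]
  have hpos : 0 < Nat.card G := Nat.card_pos
  have htot : 0 < (Nat.card G).totient := Nat.totient_pos.2 hpos
  have := (Nat.card G).totient_eq_one_iff
  omega

end Determining

theorem MonoidHom.card_ker_comp_le {G H K : Type*} [Group G] [Group H] [MulOneClass K]
    [Finite G] [Finite H] (f : H →* K) (g : G →* H) :
    Nat.card (f.comp g).ker ≤ Nat.card f.ker * Nat.card g.ker := by
  set r := g.domRestrict (f.comp g).ker
  have hker : Nat.card r.ker ≤ Nat.card g.ker :=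
    Nat.card_le_card_of_injective (fun x => (⟨x.1.1, x.2⟩ : g.ker))
      fun _ _ h => Subtype.ext (Subtype.ext (congrArg Subtype.val h :))
  have hrange : Nat.card r.range ≤ Nat.card f.ker := by
    rw [MonoidHom.domRestrict_range]
    exact Subgroup.card_le_of_le (Subgroup.map_le_iff_le_comap.2 le_rfl)
  calc Nat.card (f.comp g).ker = Nat.card r.ker * Nat.card r.range := by
        rw [← Subgroup.index_ker, Subgroup.card_mul_index]
    _ ≤ Nat.card g.ker * Nat.card f.ker := Nat.mul_le_mul hker hrange
    _ = _ := Nat.mul_comm _ _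

theorem exists_ne_one_map_eq_one_of_card_lt {G H : Type*} [Group G] [Group H] [Finite H]
    (f : G →* H) (h : Nat.card H < Nat.card G) : ∃ x, x ≠ 1 ∧ f x = 1 := by
  by_contra! hf
  exact h.not_ge (Nat.card_le_card_of_injective f ((injective_iff_map_eq_one f).2
    fun x hx => by_contra fun hx1 => hf x hx1 hx))

theorem exists_monoidHom_zmod_apply_ne_one {Q : Type*} [CommGroup Q] {p : ℕ} [Fact p.Prime]
    (hQ : ∀ y : Q, y ^ p = 1) {y : Q} (hy : y ≠ 1) :
    ∃ f : Q →* Multiplicative (ZMod p), f y ≠ 1 := by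
  have : Module (ZMod p) (Additive Q) := AddCommGroup.zmodModule fun a => hQ a.toMul
  obtain ⟨f, hf⟩ : ∃ f : Module.Dual (ZMod p) (Additive Q), f (Additive.ofMul y) ≠ 0 := by
    by_contra! h
    exact hy ((Module.forall_dual_apply_eq_zero_iff (ZMod p) (Additive.ofMul y)).1 h)
  exact ⟨AddMonoidHom.toMultiplicativeRight f.toAddMonoidHom, hf⟩

def MulAut.transvection {G : Type*} [CommGroup G] (t : G →* G) (ht : ∀ x, t (t x) = 1) :
    MulAut G where
  toFun x := x * t x
  invFun x := x / t x
  left_inv x := by simp [ht]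
  right_inv x := by simp [ht]
  map_mul' x y := by simp only [map_mul]; exact mul_mul_mul_comm _ _ _ _

theorem MulAut.transvection_apply {G : Type*} [CommGroup G] (t : G →* G) (ht : ∀ x, t (t x) = 1)
    (x : G) : MulAut.transvection t ht x = x * t x := rfl

section NotCyclic

variable {G : Type*} [CommGroup G] [Finite G]

theorem card_ker_powMonoidHom_le_of_forall_prime
    (h : ∀ p : ℕ, p.Prime → Nat.card (powMonoidHom p : G →* G).ker ≤ p) {n : ℕ} (hn : 0 < n) :
    Nat.card (powMonoidHom n : G →* G).ker ≤ n := by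
  induction n using Nat.recOnMul with
  | zero => omega
  | one => exact (card_le_one_iff_eq_bot _).2 (by ext; simp)
  | prime p hp => exact h p hp
  | mul a b iha ihb =>
    have hpow : (powMonoidHom (a * b) : G →* G) = (powMonoidHom b).comp (powMonoidHom a) :=
      MonoidHom.ext fun x => pow_mul x a b
    rw [hpow]
    calc _ ≤ _ := MonoidHom.card_ker_comp_le _ _
      _ ≤ b * a :=
        Nat.mul_le_mul (ihb (Nat.pos_of_mul_pos_left hn)) (iha (Nat.pos_of_mul_pos_right hn))
      _ = a * b := Nat.mul_comm b a

theorem isCyclic_of_forall_prime_card_ker_powMonoidHom_le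
    (h : ∀ p : ℕ, p.Prime → Nat.card (powMonoidHom p : G →* G).ker ≤ p) : IsCyclic G := by
  have hker : (powMonoidHom (Monoid.exponent G) : G →* G).ker = ⊤ :=
    (eq_top_iff' _).2 Monoid.pow_exponent_eq_one
  refine IsCyclic.of_exponent_eq_card
    (le_antisymm (Nat.le_of_dvd Nat.card_pos Group.exponent_dvd_nat_card) ?_)
  calc Nat.card G = Nat.card (powMonoidHom (Monoid.exponent G) : G →* G).ker := by
        rw [hker, card_top]
    _ ≤ _ := card_ker_powMonoidHom_le_of_forall_prime h
      (Nat.pos_of_ne_zero Monoid.exponent_ne_zero_of_finite)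

theorem zpowers_sup_range_powMonoidHom_ne_top {p : ℕ} (hp : 0 < p)
    (hcard : p < Nat.card (powMonoidHom p : G →* G).ker) (g : G) :
    zpowers g ⊔ (powMonoidHom p : G →* G).range ≠ ⊤ := by
  intro htop
  set R := (powMonoidHom p : G →* G).range
  have hgen : zpowers (g : G ⧸ R) = ⊤ := by
    simpa [Subgroup.map_sup, MonoidHom.map_zpowers, QuotientGroup.map_mk'_self,
      map_top_of_surjective _ (QuotientGroup.mk'_surjective R)] using
      congrArg (Subgroup.map (QuotientGroup.mk' R)) htop
  have : Nat.card (G ⧸ R) ≤ p := by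
    rw [← Subgroup.card_top, ← hgen, Nat.card_zpowers]
    exact orderOf_le_of_pow_eq_one hp ((QuotientGroup.eq_one_iff _).2 ⟨g, rfl⟩)
  rw [← Subgroup.index, Subgroup.index_range] at this
  omega

theorem exists_monoidHom_zmod_map_eq_one_ne_one {p : ℕ} [Fact p.Prime]
    (hcard : p < Nat.card (powMonoidHom p : G →* G).ker) (g : G) :
    ∃ e : G →* Multiplicative (ZMod p), e g = 1 ∧ e ≠ 1 := by
  set N := zpowers g ⊔ (powMonoidHom p : G →* G).range
  obtain ⟨x, hx⟩ : ∃ x, x ∉ N := by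
    by_contra! h
    exact zpowers_sup_range_powMonoidHom_ne_top (Fact.out : p.Prime).pos hcard g
      ((eq_top_iff' N).2 h)
  have hQ : ∀ y : G ⧸ N, y ^ p = 1 := by
    rintro ⟨y⟩
    exact (QuotientGroup.eq_one_iff _).2 (mem_sup_right ⟨y, rfl⟩)
  obtain ⟨f, hf⟩ := exists_monoidHom_zmod_apply_ne_one hQ (y := (x : G ⧸ N))
    (by rwa [Ne, QuotientGroup.eq_one_iff])
  refine ⟨f.comp (QuotientGroup.mk' N), ?_, fun h => hf (DFunLike.congr_fun h x)⟩
  simp [(QuotientGroup.eq_one_iff g).2 (mem_sup_left (mem_zpowers g))]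

theorem not_isDetermining_singleton_of_lt_card_ker_powMonoidHom {p : ℕ} [Fact p.Prime]
    (hcard : p < Nat.card (powMonoidHom p : G →* G).ker) (g : G) :
    ¬ IsDetermining ({g} : Set G) := by
  obtain ⟨e, heg, he⟩ := exists_monoidHom_zmod_map_eq_one_ne_one hcard g
  obtain ⟨⟨a, ha⟩, ha1, hea : e a = 1⟩ := exists_ne_one_map_eq_one_of_card_lt
    (e.comp (powMonoidHom p : G →* G).ker.subtype) (by simpa using hcard)
  have hcard_a : Nat.card (zpowers a) = p := by
    rw [Nat.card_zpowers]
    exact orderOf_eq_prime ha (by simpa using ha1)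
  let ψ : Multiplicative (ZMod p) ≃* zpowers a := mulEquivOfPrimeCardEq (by simp) hcard_a
  let t : G →* G := (zpowers a).subtype.comp (ψ.toMonoidHom.comp e)
  have he_zpowers : ∀ y ∈ zpowers a, e y = 1 := by
    rintro _ ⟨k, rfl⟩
    simp [hea]
  have ht : ∀ x, t (t x) = 1 := fun x => by simp [t, he_zpowers _ (ψ (e x)).2]
  obtain ⟨x, hx⟩ := DFunLike.ne_iff.1 he
  intro hdet
  have h := isDetermining_singleton_iff.1 hdet (MulAut.transvection t ht)
    (by simp [MulAut.transvection_apply, t, heg])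
  exact hx (by simpa [MulAut.transvection_apply, t] using DFunLike.congr_fun h x)

theorem not_isDetermining_singleton_of_not_isCyclic (hG : ¬ IsCyclic G) (g : G) :
    ¬ IsDetermining ({g} : Set G) := by
  obtain ⟨p, hp, hcard⟩ : ∃ p : ℕ, p.Prime ∧ p < Nat.card (powMonoidHom p : G →* G).ker := by
    by_contra! h
    exact hG (isCyclic_of_forall_prime_card_ker_powMonoidHom_le h)
  have := Fact.mk hp
  exact not_isDetermining_singleton_of_lt_card_ker_powMonoidHom hcard g

end NotCyclic

theorem stmt12_general {G : Type*} [Group G] [Finite G] :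
    detNumber G = 1 ↔ IsCyclic G ∧ 3 ≤ Nat.card G := by
  rw [detNumber_eq_one_iff, isDetermining_empty_iff, not_subsingleton_iff_nontrivial]
  constructor
  · rintro ⟨hAut, g, hg⟩
    have hcyc : IsCyclic G := by
      by_contra hG
      let _ : CommGroup G := { mul_comm := mul_comm_of_isDetermining_singleton hg }
      exact not_isDetermining_singleton_of_not_isCyclic hG g hg
    exact ⟨hcyc, IsCyclic.nontrivial_mulAut_iff.1 hAut⟩
  · rintro ⟨hcyc, h3⟩
    obtain ⟨g, hg⟩ := hcyc.exists_generator
    refine ⟨IsCyclic.nontrivial_mulAut_iff.2 h3, g, isDetermining_of_closure_eq_top ?_⟩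
    rw [← zpowers_eq_closure, eq_top_iff']
    exact hg

theorem stmt12 {G : Type*} [Group G] [Finite G] (h2 : 2 ≤ Nat.card G) :
    detNumber G = 1 ↔ IsCyclic G ∧ 3 ≤ Nat.card G :=
  stmt12_general
end

section
/- Every finite abelian group of order at least 3 satisfies α(G) = γ(G). -/
/-!
A generating set is determining, since automorphisms agreeing on generators agree. Conversely,
let `D` be determining. For an endomorphism `φ` of `G` trivial on `D`, the map `x ↦ x * φ x`
fixes `D`; if it were injective it would be an automorphism, forcing `φ = 1`. So a nontrivial
such `φ` inverts some `x ≠ 1`, and when its range has prime order it inverts its whole range.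
If `⟨D⟩ ≠ G`, pick a maximal subgroup `M ⊇ D`, of prime index `p`, and compose `G → G ⧸ M`
with an isomorphism onto a cyclic subgroup of order `p`. Applying the above to `φ` and `φ ^ 2` shows
`p = 2`, and then `M` contains no involution. Hence for an involution `t`, `D ∪ {t}` generates
`G`, every `d ∈ D` has odd order, and replacing some `d` by `d * t` gives a generating set of
size at most `|D|`; `D` is nonempty because `|G| ≥ 3`.
-/

theorem IsDetermining.of_closure_eq_top {G : Type*} [Group G] {D : Set G}
    (hD : Subgroup.closure D = ⊤) : IsDetermining D := fun _ hφ =>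
  MulEquiv.toMonoidHom_injective (MonoidHom.eq_of_eqOn_dense hD hφ)

theorem detNumber_le_genNumber (G : Type*) [Group G] [Finite G] : detNumber G ≤ genNumber G := by
  have : Fintype G := Fintype.ofFinite G
  obtain ⟨D, hcard, hD⟩ := Nat.sInf_mem (s := {n | ∃ D : Finset G, D.card = n ∧
    Subgroup.closure (D : Set G) = ⊤}) ⟨_, Finset.univ, rfl, by simp⟩
  calc detNumber G ≤ D.card := Nat.sInf_le ⟨D, rfl, .of_closure_eq_top hD⟩
    _ = genNumber G := hcard

theorem IsCoatom.index_prime {G : Type*} [CommGroup G] {M : Subgroup G} (hM : IsCoatom M) :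
    M.index.Prime := by
  let e : Subgroup (G ⧸ M) ≃o Set.Ici M := QuotientGroup.comapMk'OrderIso M
  have : IsSimpleOrder (Subgroup (G ⧸ M)) :=
    e.isSimpleOrder_iff.mpr (Set.isSimpleOrder_Ici_iff_isCoatom.mpr hM)
  have : IsSimpleGroup (G ⧸ M) :=
    { Subgroup.nontrivial_iff.mp inferInstance with
      eq_bot_or_eq_top_of_normal := fun H _ => IsSimpleOrder.eq_bot_or_eq_top H }
  exact IsSimpleGroup.prime_card

theorem IsCoatom.exists_le_ker_range_eq_zpowers {G : Type*} [CommGroup G] {M : Subgroup G}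
    (hM : IsCoatom M) {z : G} (hz : orderOf z = M.index) :
    ∃ φ : G →* G, M ≤ φ.ker ∧ φ.range = Subgroup.zpowers z := by
  have : Fact M.index.Prime := ⟨hM.index_prime⟩
  let e : G ⧸ M ≃* Subgroup.zpowers z :=
    mulEquivOfPrimeCardEq (p := M.index) rfl (by rw [Nat.card_zpowers, hz])
  refine ⟨(Subgroup.zpowers z).subtype.comp (e.toMonoidHom.comp (QuotientGroup.mk' M)), ?_, ?_⟩
  · intro x hx
    simp [(QuotientGroup.eq_one_iff x).mpr hx]
  · rw [MonoidHom.range_comp,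
      MonoidHom.range_eq_top.mpr (e.surjective.comp (QuotientGroup.mk'_surjective M)),
      ← MonoidHom.range_eq_map, Subgroup.range_subtype]

theorem mem_zpowers_mul_of_odd_orderOf {G : Type*} [CommGroup G] {d t : G} (ht : t ^ 2 = 1)
    (hd : Odd (orderOf d)) : d ∈ Subgroup.zpowers (d * t) := by
  obtain ⟨k, hk⟩ := hd
  refine ⟨(orderOf d + 1 : ℕ), ?_⟩
  simp only [zpow_natCast]
  rw [mul_pow, pow_succ, pow_orderOf_eq_one, one_mul, hk, show 2 * k + 1 + 1 = 2 * (k + 1) by ring,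
    pow_mul, ht, one_pow, mul_one]

theorem closure_insert_mul_erase_eq_top {G : Type*} [CommGroup G] [DecidableEq G]
    {D : Finset G} {d t : G} (ht : t ^ 2 = 1) (hodd : Odd (orderOf d))
    (htop : Subgroup.closure (insert t (D : Set G)) = ⊤) :
    Subgroup.closure ((insert (d * t) (D.erase d) : Finset G) : Set G) = ⊤ := by
  set K := Subgroup.closure ((insert (d * t) (D.erase d) : Finset G) : Set G)
  have hdt : d * t ∈ K := Subgroup.subset_closure (by simp)
  have hdK : d ∈ K := Subgroup.zpowers_le.mpr hdt (mem_zpowers_mul_of_odd_orderOf ht hodd)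
  have htK : t ∈ K := by simpa using K.mul_mem (K.inv_mem hdK) hdt
  rw [eq_top_iff, ← htop, Subgroup.closure_le, Set.insert_subset_iff]
  refine ⟨htK, fun x hx => ?_⟩
  by_cases hxd : x = d
  · exact hxd ▸ hdK
  · exact Subgroup.subset_closure (by simp [hx, hxd])

namespace IsDetermining

variable {G : Type*} [CommGroup G] [Finite G] {D : Set G} {φ : G →* G}

theorem exists_ne_one_apply_eq_inv (hD : IsDetermining D) (hφD : ∀ d ∈ D, φ d = 1)
    (hφ : φ ≠ 1) : ∃ x ≠ 1, φ x = x⁻¹ := by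
  by_contra! h
  have hinj : Function.Injective (MonoidHom.id G * φ) :=
    (injective_iff_map_eq_one _).mpr fun x hx => by
      by_contra hx1
      exact h x hx1 (eq_inv_of_mul_eq_one_right hx)
  have hfix := hD (MulEquiv.ofBijective _ (Finite.injective_iff_bijective.mp hinj))
    fun d hd => by simp [hφD d hd]
  exact hφ (MonoidHom.ext fun x => by simpa using DFunLike.congr_fun hfix x)

theorem apply_eq_inv_of_mem_range (hD : IsDetermining D) (hφD : ∀ d ∈ D, φ d = 1)
    (hφp : (Nat.card φ.range).Prime) {y : G} (hy : y ∈ φ.range) : φ y = y⁻¹ := by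
  have hφ : φ ≠ 1 := by
    rintro rfl
    exact Nat.not_prime_one (by simpa using hφp)
  obtain ⟨x, hx1, hx⟩ := hD.exists_ne_one_apply_eq_inv hφD hφ
  have hxφ : Subgroup.zpowers x ≤ φ.range :=
    Subgroup.zpowers_le.mpr ⟨x⁻¹, by rw [map_inv, hx, inv_inv]⟩
  have hzx : Subgroup.zpowers x = φ.range := by
    refine Subgroup.eq_of_le_of_card_ge hxφ ?_
    rcases (Nat.dvd_prime hφp).mp (Subgroup.card_dvd_of_le hxφ) with h | h
    · rw [Nat.card_zpowers, orderOf_eq_one_iff] at h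
      exact absurd h hx1
    · exact h.ge
  obtain ⟨k, rfl⟩ := Subgroup.mem_zpowers_iff.mp (hzx ▸ hy)
  rw [map_zpow, hx, inv_zpow]

theorem card_range_eq_two (hD : IsDetermining D) (hφD : ∀ d ∈ D, φ d = 1)
    (hφp : (Nat.card φ.range).Prime) : Nat.card φ.range = 2 := by
  by_contra hp2
  have hcop : Nat.Coprime (Nat.card φ.range) 2 := (Nat.coprime_primes hφp Nat.prime_two).mpr hp2
  have hφ2 : φ ^ 2 ≠ 1 := by
    intro h
    have : φ = 1 := MonoidHom.ext fun g => by
      have h2 : orderOf (φ g) ∣ 2 := orderOf_dvd_of_pow_eq_one (DFunLike.congr_fun h g)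
      have hp : orderOf (φ g) ∣ Nat.card φ.range := φ.range.orderOf_dvd_natCard ⟨g, rfl⟩
      simpa using (Nat.Coprime.coprime_dvd_left hp hcop).eq_one_of_dvd h2
    subst this
    exact Nat.not_prime_one (by simpa using hφp)
  obtain ⟨y, hy1, hy⟩ := hD.exists_ne_one_apply_eq_inv (φ := φ ^ 2)
    (fun d hd => by simp [hφD d hd]) hφ2
  replace hy : φ y ^ 2 = y⁻¹ := hy
  have hyφ : y ∈ φ.range := ⟨y⁻¹ ^ 2, by rw [map_pow, map_inv, inv_pow, hy, inv_inv]⟩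
  rw [hD.apply_eq_inv_of_mem_range hφD hφp hyφ, pow_two, mul_eq_left, inv_eq_one] at hy
  exact hy1 hy

theorem index_eq_two_of_isCoatom (hD : IsDetermining D) {M : Subgroup G} (hM : IsCoatom M)
    (hDM : D ⊆ M) : M.index = 2 := by
  have : Fact M.index.Prime := ⟨hM.index_prime⟩
  obtain ⟨z, hz⟩ := exists_prime_orderOf_dvd_card' M.index M.index_dvd_card
  obtain ⟨φ, hMφ, hφ⟩ := hM.exists_le_ker_range_eq_zpowers hz
  have hcard : Nat.card φ.range = M.index := by rw [hφ, Nat.card_zpowers, hz]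
  rw [← hcard]
  exact hD.card_range_eq_two (fun d hd => hMφ (hDM hd)) (hcard ▸ hM.index_prime)

theorem notMem_of_isCoatom_of_orderOf_eq_two (hD : IsDetermining D) {M : Subgroup G}
    (hM : IsCoatom M) (hDM : D ⊆ M) {t : G} (ht : orderOf t = 2) : t ∉ M := by
  intro htM
  have hindex := hD.index_eq_two_of_isCoatom hM hDM
  obtain ⟨φ, hMφ, hφ⟩ := hM.exists_le_ker_range_eq_zpowers (ht.trans hindex.symm)
  have hcard : (Nat.card φ.range).Prime := by rw [hφ, Nat.card_zpowers, ht]; exact Nat.prime_two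
  have hinv := hD.apply_eq_inv_of_mem_range (fun d hd => hMφ (hDM hd)) hcard
    (hφ ▸ Subgroup.mem_zpowers t)
  rw [hMφ htM, eq_comm, inv_eq_one] at hinv
  simp [hinv] at ht

end IsDetermining

theorem IsDetermining.exists_card_le_closure_eq_top {G : Type*} [CommGroup G] [Finite G]
    (h3 : 3 ≤ Nat.card G) {D : Finset G} (hD : IsDetermining (D : Set G)) :
    ∃ D' : Finset G, D'.card ≤ D.card ∧ Subgroup.closure (D' : Set G) = ⊤ := by
  classical
  by_cases hDtop : Subgroup.closure (D : Set G) = ⊤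
  · exact ⟨D, le_rfl, hDtop⟩
  obtain ⟨M, hM, hDM⟩ := (eq_top_or_exists_le_coatom _).resolve_left hDtop
  rw [Subgroup.closure_le] at hDM
  obtain ⟨t, ht⟩ := exists_prime_orderOf_dvd_card' 2
    (hD.index_eq_two_of_isCoatom hM hDM ▸ M.index_dvd_card)
  have htop : Subgroup.closure (insert t (D : Set G)) = ⊤ := by
    by_contra h
    obtain ⟨N, hN, hDN⟩ := (eq_top_or_exists_le_coatom _).resolve_left h
    rw [Subgroup.closure_le, Set.insert_subset_iff] at hDN
    exact hD.notMem_of_isCoatom_of_orderOf_eq_two hN hDN.2 ht hDN.1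
  obtain ⟨d, hd⟩ : D.Nonempty := by
    rw [Finset.nonempty_iff_ne_empty]
    rintro rfl
    have : Nat.card G = 2 := by
      rw [Finset.coe_empty, insert_empty_eq, ← Subgroup.zpowers_eq_closure] at htop
      rw [← ht, ← Nat.card_zpowers, htop, Subgroup.card_top]
    omega
  have hodd : Odd (orderOf d) := by
    rw [Nat.odd_iff, ← Nat.two_dvd_ne_zero]
    intro h2
    exact hD.notMem_of_isCoatom_of_orderOf_eq_two hM hDM
      (orderOf_pow_orderOf_div (orderOf_pos d).ne' h2) (M.pow_mem (hDM hd) _)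
  refine ⟨insert (d * t) (D.erase d), ?_,
    closure_insert_mul_erase_eq_top (ht ▸ pow_orderOf_eq_one t) hodd htop⟩
  have := Finset.card_insert_le (d * t) (D.erase d)
  rw [Finset.card_erase_of_mem hd] at this
  have := Finset.card_pos.mpr ⟨d, hd⟩
  omega

theorem genNumber_le_detNumber {G : Type*} [CommGroup G] [Finite G] (h3 : 3 ≤ Nat.card G) :
    genNumber G ≤ detNumber G := by
  have : Fintype G := Fintype.ofFinite G
  obtain ⟨D, hcard, hD⟩ := Nat.sInf_mem (s := {n | ∃ D : Finset G, D.card = n ∧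
    IsDetermining (D : Set G)}) ⟨_, Finset.univ, rfl, .of_closure_eq_top (by simp)⟩
  obtain ⟨D', hle, hD'⟩ := hD.exists_card_le_closure_eq_top h3
  calc genNumber G ≤ D'.card := Nat.sInf_le ⟨D', rfl, hD'⟩
    _ ≤ D.card := hle
    _ = detNumber G := hcard

theorem stmt17 {G : Type*} [CommGroup G] [Finite G] (h3 : 3 ≤ Nat.card G) :
    detNumber G = genNumber G :=
  (detNumber_le_genNumber G).antisymm (genNumber_le_detNumber h3)
end
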